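/- Let c be a monotone stateless emptier on n cups that, in every state having at least one cup with positive fill, selects a cup with positive fill. Let (j_1, r_1), (j_2, r_2), (j_3, r_3) be pairs of cups and fills, where each r_i is a positive integer multiple of 1/2. If (j_1, r_1) dominates (j_2, r_2) and (j_2, r_2) dominates (j_3, r_3), then (j_1, r_1) dominates (j_3, r_3). -/

import Mathlib

/-- A state of `n` cups: each fill is a nonnegative integer multiple of `1/2`. -/
def HalfState (n : ℕ) (S : Fin n → ℝ) : Prop := ∀ i, ∃ k : ℕ, S i = (k : ℝ) / 2

/-- A stateless emptier `c` is monotone if whenever `c S = j` and `S'` agrees with `S`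
except that the fill of a single cup `i ≠ j` has been reduced, then `c S' = j`. -/
def MonotoneEmptier (n : ℕ) (c : (Fin n → ℝ) → Fin n) : Prop :=
  ∀ S S' : Fin n → ℝ, HalfState n S → HalfState n S' →
    ∀ i : Fin n, i ≠ c S → S' i ≤ S i → (∀ j, j ≠ i → S' j = S j) → c S' = c S

/-- The state in which cup `j₁` has fill `r₁`, cup `j₂` has fill `r₂`, and all other
cups are empty. -/
def twoCup (n : ℕ) (j₁ j₂ : Fin n) (r₁ r₂ : ℝ) : Fin n → ℝ :=
  fun k => if k = j₁ then r₁ else if k = j₂ then r₂ else 0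

/-- `(j₁, r₁)` dominates `(j₂, r₂)`: for `j₁ ≠ j₂`, the emptier selects `j₁` in the state
where only `j₁` and `j₂` are nonempty with fills `r₁`, `r₂`; for `j₁ = j₂`, `r₁ > r₂`. -/
def Dominates (n : ℕ) (c : (Fin n → ℝ) → Fin n)
    (j₁ : Fin n) (r₁ : ℝ) (j₂ : Fin n) (r₂ : ℝ) : Prop :=
  if j₁ = j₂ then r₂ < r₁ else c (twoCup n j₁ j₂ r₁ r₂) = j₁

/-!
Monotonicity lets one lower any unselected cup and, by contraposition, raise the selected one,
so domination is monotone in both fills; this settles every case in which two of the three cups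
coincide. For three distinct cups consider the state holding all three fills: emptying `j₁`
(resp. `j₃`) shows that the emptier selects neither `j₃` (resp. `j₂`) there, so it selects
`j₁`, and still does after emptying `j₂`.
-/

section

def IsHalfFill (r : ℝ) : Prop := ∃ k : ℕ, r = (k : ℝ) / 2

lemma IsHalfFill.nonneg {r : ℝ} (h : IsHalfFill r) : 0 ≤ r := by
  obtain ⟨k, rfl⟩ := h
  positivity

lemma isHalfFill_zero : IsHalfFill 0 := ⟨0, by simp⟩

lemma isHalfFill_and_pos_of_eq_succ_div_two {r : ℝ} (h : ∃ k : ℕ, r = (k + 1 : ℝ) / 2) :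
    IsHalfFill r ∧ 0 < r := by
  obtain ⟨k, rfl⟩ := h
  exact ⟨⟨k + 1, by push_cast; ring⟩, by positivity⟩

variable {n : ℕ}

lemma HalfState.update {S : Fin n → ℝ} (hS : HalfState n S) (i : Fin n) {x : ℝ}
    (hx : IsHalfFill x) : HalfState n (Function.update S i x) := by
  intro k
  by_cases hk : k = i
  · subst hk
    rw [Function.update_self]
    exact hx
  · rw [Function.update_of_ne hk]
    exact hS k

section TwoCup

variable {j₁ j₂ : Fin n} {r₁ r₂ : ℝ}

lemma twoCup_halfState (h₁ : IsHalfFill r₁) (h₂ : IsHalfFill r₂) :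
    HalfState n (twoCup n j₁ j₂ r₁ r₂) := by
  intro k
  unfold twoCup
  split_ifs
  exacts [h₁, h₂, isHalfFill_zero]

@[simp]
lemma twoCup_apply_left : twoCup n j₁ j₂ r₁ r₂ j₁ = r₁ := by
  simp [twoCup]

lemma twoCup_apply_right (h : j₁ ≠ j₂) : twoCup n j₁ j₂ r₁ r₂ j₂ = r₂ := by
  simp [twoCup, h.symm]

lemma twoCup_apply_of_ne {k : Fin n} (h₁ : k ≠ j₁) (h₂ : k ≠ j₂) :
    twoCup n j₁ j₂ r₁ r₂ k = 0 := by
  simp [twoCup, h₁, h₂]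

lemma twoCup_comm (h : j₁ ≠ j₂) : twoCup n j₁ j₂ r₁ r₂ = twoCup n j₂ j₁ r₂ r₁ := by
  funext k
  unfold twoCup
  by_cases h₁ : k = j₁ <;> by_cases h₂ : k = j₂ <;> simp_all

lemma update_twoCup_left (r : ℝ) :
    Function.update (twoCup n j₁ j₂ r₁ r₂) j₁ r = twoCup n j₁ j₂ r r₂ := by
  funext k
  by_cases hk : k = j₁
  · subst hk
    simp
  · simp [twoCup, hk]

lemma update_twoCup_right (h : j₁ ≠ j₂) (r : ℝ) :
    Function.update (twoCup n j₁ j₂ r₁ r₂) j₂ r = twoCup n j₁ j₂ r₁ r := by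
  rw [twoCup_comm h, update_twoCup_left, twoCup_comm h.symm]

end TwoCup

def threeCup (n : ℕ) (j₁ j₂ j₃ : Fin n) (r₁ r₂ r₃ : ℝ) : Fin n → ℝ :=
  Function.update (twoCup n j₂ j₃ r₂ r₃) j₁ r₁

section ThreeCup

variable {j₁ j₂ j₃ : Fin n} {r₁ r₂ r₃ : ℝ}

lemma threeCup_halfState (h₁ : IsHalfFill r₁) (h₂ : IsHalfFill r₂) (h₃ : IsHalfFill r₃) :
    HalfState n (threeCup n j₁ j₂ j₃ r₁ r₂ r₃) :=
  (twoCup_halfState h₂ h₃).update j₁ h₁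

lemma threeCup_apply_eq_zero {k : Fin n} (h₁ : k ≠ j₁) (h₂ : k ≠ j₂) (h₃ : k ≠ j₃) :
    threeCup n j₁ j₂ j₃ r₁ r₂ r₃ k = 0 := by
  rw [threeCup, Function.update_of_ne h₁, twoCup_apply_of_ne h₂ h₃]

lemma update_threeCup_first (h₂ : j₁ ≠ j₂) (h₃ : j₁ ≠ j₃) :
    Function.update (threeCup n j₁ j₂ j₃ r₁ r₂ r₃) j₁ 0 = twoCup n j₂ j₃ r₂ r₃ := by
  funext k
  by_cases hk₁ : k = j₁ <;> by_cases hk₂ : k = j₂ <;> by_cases hk₃ : k = j₃ <;>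
    simp_all [threeCup, twoCup]

lemma update_threeCup_second (h₁ : j₂ ≠ j₁) (h₃ : j₂ ≠ j₃) :
    Function.update (threeCup n j₁ j₂ j₃ r₁ r₂ r₃) j₂ 0 = twoCup n j₁ j₃ r₁ r₃ := by
  funext k
  by_cases hk₁ : k = j₁ <;> by_cases hk₂ : k = j₂ <;> by_cases hk₃ : k = j₃ <;>
    simp_all [threeCup, twoCup]

lemma update_threeCup_third (h₁ : j₃ ≠ j₁) (h₂ : j₃ ≠ j₂) :
    Function.update (threeCup n j₁ j₂ j₃ r₁ r₂ r₃) j₃ 0 = twoCup n j₁ j₂ r₁ r₂ := by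
  funext k
  by_cases hk₁ : k = j₁ <;> by_cases hk₂ : k = j₂ <;> by_cases hk₃ : k = j₃ <;>
    simp_all [threeCup, twoCup]

end ThreeCup

namespace MonotoneEmptier

variable {c : (Fin n → ℝ) → Fin n} {S : Fin n → ℝ} {x : ℝ}

lemma apply_update_of_le (hmono : MonotoneEmptier n c) (hS : HalfState n S) {i : Fin n}
    (hi : i ≠ c S) (hx : IsHalfFill x) (hle : x ≤ S i) :
    c (Function.update S i x) = c S :=
  hmono S _ hS (hS.update i hx) i hi (by simpa using hle)
    (fun k hk => Function.update_of_ne hk _ _)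

lemma apply_update_zero (hmono : MonotoneEmptier n c) (hS : HalfState n S) {i : Fin n}
    (hi : i ≠ c S) : c (Function.update S i 0) = c S :=
  hmono.apply_update_of_le hS hi isHalfFill_zero (IsHalfFill.nonneg (hS i))

lemma apply_update_of_ge (hmono : MonotoneEmptier n c) (hS : HalfState n S) {j : Fin n}
    (hj : c S = j) (hx : IsHalfFill x) (hle : S j ≤ x) :
    c (Function.update S j x) = j := by
  by_contra hne
  have hS' := hS.update j hx
  have hback := hmono.apply_update_of_le hS' (Ne.symm hne) (hS j) (by simpa using hle)
  rw [Function.update_idem, Function.update_eq_self] at hback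
  exact hne (hback.symm.trans hj)

end MonotoneEmptier

namespace Dominates

variable {c : (Fin n → ℝ) → Fin n} {j₁ j₂ : Fin n} {r₁ r₂ : ℝ}

lemma mono_left (hmono : MonotoneEmptier n c) (h : Dominates n c j₁ r₁ j₂ r₂) {r : ℝ}
    (hle : r₁ ≤ r) (h₁ : IsHalfFill r₁) (h₂ : IsHalfFill r₂) (hr : IsHalfFill r) :
    Dominates n c j₁ r j₂ r₂ := by
  unfold Dominates at h ⊢
  split_ifs at h ⊢
  · exact h.trans_le hle
  · rw [← update_twoCup_left]
    exact hmono.apply_update_of_ge (twoCup_halfState h₁ h₂) h hr (by simpa using hle)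

lemma mono_right (hmono : MonotoneEmptier n c) (h : Dominates n c j₁ r₁ j₂ r₂) {r : ℝ}
    (hle : r ≤ r₂) (h₁ : IsHalfFill r₁) (h₂ : IsHalfFill r₂) (hr : IsHalfFill r) :
    Dominates n c j₁ r₁ j₂ r := by
  unfold Dominates at h ⊢
  split_ifs at h ⊢ with hj
  · exact hle.trans_lt h
  · have hsel := hmono.apply_update_of_le (twoCup_halfState h₁ h₂) (h ▸ Ne.symm hj) hr
      (by rwa [twoCup_apply_right hj])
    rwa [update_twoCup_right hj, h] at hsel

lemma asymm (h : Dominates n c j₁ r₁ j₂ r₂) : ¬ Dominates n c j₂ r₂ j₁ r₁ := by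
  unfold Dominates at h ⊢
  by_cases hj : j₁ = j₂
  · subst hj
    rw [if_pos rfl] at h ⊢
    exact h.not_gt
  · rw [if_neg hj] at h
    rw [if_neg (Ne.symm hj), ← twoCup_comm hj, h]
    exact hj

lemma trans_of_pairwise_ne (hmono : MonotoneEmptier n c)
    (hpos : ∀ S : Fin n → ℝ, HalfState n S → (∃ i, 0 < S i) → 0 < S (c S))
    {j₃ : Fin n} {r₃ : ℝ} (h₁₂ : j₁ ≠ j₂) (h₁₃ : j₁ ≠ j₃) (h₂₃ : j₂ ≠ j₃)
    (h₁ : IsHalfFill r₁) (h₂ : IsHalfFill r₂) (h₃ : IsHalfFill r₃) (hr₁ : 0 < r₁)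
    (h12 : Dominates n c j₁ r₁ j₂ r₂) (h23 : Dominates n c j₂ r₂ j₃ r₃) :
    Dominates n c j₁ r₁ j₃ r₃ := by
  rw [Dominates, if_neg h₁₂] at h12
  rw [Dominates, if_neg h₂₃] at h23
  rw [Dominates, if_neg h₁₃]
  set T := threeCup n j₁ j₂ j₃ r₁ r₂ r₃
  have hT : HalfState n T := threeCup_halfState h₁ h₂ h₃
  have hsel : c T = j₁ ∨ c T = j₂ ∨ c T = j₃ := by
    have hfill := hpos T hT ⟨j₁, by simpa [T, threeCup] using hr₁⟩
    by_contra! hne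
    exact hfill.ne' (threeCup_apply_eq_zero hne.1 hne.2.1 hne.2.2)
  have hT₁ : c T = j₁ := by
    rcases hsel with hsel | hsel | hsel
    · exact hsel
    · have h := hmono.apply_update_zero hT (hsel ▸ h₂₃.symm)
      rw [update_threeCup_third h₁₃.symm h₂₃.symm, h12, hsel] at h
      exact absurd h h₁₂
    · have h := hmono.apply_update_zero hT (hsel ▸ h₁₃)
      rw [update_threeCup_first h₁₂ h₁₃, h23, hsel] at h
      exact absurd h h₂₃
  rw [← update_threeCup_second h₁₂.symm h₂₃, hmono.apply_update_zero hT (hT₁ ▸ h₁₂.symm), hT₁]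

end Dominates

end

/-- Domination is transitive, for any monotone stateless emptier that always selects a
cup with positive fill whenever one exists. -/
theorem stmt_6 (n : ℕ) (c : (Fin n → ℝ) → Fin n) (hmono : MonotoneEmptier n c)
    (hpos : ∀ S : Fin n → ℝ, HalfState n S → (∃ i, 0 < S i) → 0 < S (c S))
    (j₁ j₂ j₃ : Fin n) (r₁ r₂ r₃ : ℝ)
    (h₁ : ∃ k : ℕ, r₁ = (k + 1 : ℝ) / 2) (h₂ : ∃ k : ℕ, r₂ = (k + 1 : ℝ) / 2)
    (h₃ : ∃ k : ℕ, r₃ = (k + 1 : ℝ) / 2)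
    (h12 : Dominates n c j₁ r₁ j₂ r₂) (h23 : Dominates n c j₂ r₂ j₃ r₃) :
    Dominates n c j₁ r₁ j₃ r₃ := by
  obtain ⟨h₁, hr₁⟩ := isHalfFill_and_pos_of_eq_succ_div_two h₁
  obtain ⟨h₂, -⟩ := isHalfFill_and_pos_of_eq_succ_div_two h₂
  obtain ⟨h₃, -⟩ := isHalfFill_and_pos_of_eq_succ_div_two h₃
  by_cases h₁₂ : j₁ = j₂
  · subst h₁₂
    rw [Dominates, if_pos rfl] at h12
    exact h23.mono_left hmono h12.le h₂ h₃ h₁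
  by_cases h₂₃ : j₂ = j₃
  · subst h₂₃
    rw [Dominates, if_pos rfl] at h23
    exact h12.mono_right hmono h23.le h₁ h₂ h₃
  by_cases h₁₃ : j₁ = j₃
  · subst h₁₃
    rw [Dominates, if_pos rfl]
    by_contra! hle
    exact h12.asymm (h23.mono_right hmono hle h₂ h₃ h₁)
  exact h12.trans_of_pairwise_ne hmono hpos h₁₂ h₁₃ h₂₃ h₁ h₂ h₃ hr₁ h23
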